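/- Let $\omega_0 = dx \wedge dy$ on $\mathbb{R}^2$, and for smooth $h : \mathbb{R}^2 \to \mathbb{R}$ let $X_h = (\partial h/\partial y, -\partial h/\partial x)$. For symmetric 2-tensor fields $t = a\,dx^2+2b\,dx\,dy+c\,dy^2$ and $t' = a'\,dx^2+2b'\,dx\,dy+c'\,dy^2$, define the scalar pairing $g(t,t') = ac' - 2bb' + ca'$. Then this zeroth-order bilinear operator is infinitesimally invariant under Hamiltonian flows: for every smooth $h$ and all smooth symmetric 2-tensor fields $t, t'$, $X_h\big(g(t,t')\big) = g(L_{X_h} t,\, t') + g(t,\, L_{X_h} t')$, where $X_h(f) = h_y f_x - h_x f_y$ denotes the derivative of a function $f$ along $X_h$. -/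

import Mathlib

/-- Partial derivative in the `x` direction of a function on `ℝ²`. -/
noncomputable def pdx (f : ℝ × ℝ → ℝ) : ℝ × ℝ → ℝ := fun z => fderiv ℝ f z (1, 0)

/-- Partial derivative in the `y` direction of a function on `ℝ²`. -/
noncomputable def pdy (f : ℝ × ℝ → ℝ) : ℝ × ℝ → ℝ := fun z => fderiv ℝ f z (0, 1)

/-- A symmetric 2-tensor field `t = a dx² + 2b dx dy + c dy²` on `ℝ²`,
recorded by its three component functions. -/
structure Tens2 where
  a : ℝ × ℝ → ℝ
  b : ℝ × ℝ → ℝ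
  c : ℝ × ℝ → ℝ

/-- All three components are smooth. -/
def Tens2.Smooth (t : Tens2) : Prop :=
  ContDiff ℝ (⊤ : ℕ∞) t.a ∧ ContDiff ℝ (⊤ : ℕ∞) t.b ∧ ContDiff ℝ (⊤ : ℕ∞) t.c

/-- Lie derivative of `t = a dx² + 2b dx dy + c dy²` along the vector field `X = (X1, X2)`. -/
noncomputable def lieDeriv (X1 X2 : ℝ × ℝ → ℝ) (t : Tens2) : Tens2 where
  a := fun z => X1 z * pdx t.a z + X2 z * pdy t.a z + 2 * t.a z * pdx X1 z + 2 * t.b z * pdx X2 z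
  b := fun z => X1 z * pdx t.b z + X2 z * pdy t.b z + t.a z * pdy X1 z
    + t.b z * (pdx X1 z + pdy X2 z) + t.c z * pdx X2 z
  c := fun z => X1 z * pdx t.c z + X2 z * pdy t.c z + 2 * t.b z * pdy X1 z + 2 * t.c z * pdy X2 z

/-- Lie derivative along the Hamiltonian vector field `X_h = (h_y, -h_x)` of `h`. -/
noncomputable def lieH (h : ℝ × ℝ → ℝ) (t : Tens2) : Tens2 :=
  lieDeriv (pdy h) (fun z => - pdx h z) t

/-- The scalar pairing `g(t,t') = a c' - 2 b b' + c a'`. -/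
noncomputable def gPair (t t' : Tens2) : ℝ × ℝ → ℝ :=
  fun z => t.a z * t'.c z - 2 * t.b z * t'.b z + t.c z * t'.a z

/-- Schwarz symmetry of second partial derivatives for a smooth function. -/
lemma schwarz_aux {h : ℝ × ℝ → ℝ} (hh : ContDiff ℝ (⊤ : ℕ∞) h) (z v w : ℝ × ℝ) :
    fderiv ℝ (fun y => fderiv ℝ h y w) z v = fderiv ℝ (fun y => fderiv ℝ h y v) z w := by
  have hd : DifferentiableAt ℝ (fderiv ℝ h) z :=
    ((hh.fderiv_right (m := 1) ((by exact WithTop.coe_le_coe.mpr le_top))).differentiable one_ne_zero).differentiableAt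
  have e : ∀ u : ℝ × ℝ,
      fderiv ℝ (fun y => fderiv ℝ h y u) z = (fderiv ℝ (fderiv ℝ h) z).flip u := by
    intro u
    rw [fderiv_clm_apply hd (differentiableAt_const u)]
    simp
  rw [e, e]
  exact (hh.contDiffAt.isSymmSndFDerivAt (by simp [minSmoothness_of_isRCLikeNormedField]; exact WithTop.coe_le_coe.mpr le_top)).eq v w

/-- Product-rule expansion of the derivative of the pairing. -/
lemma fderiv_gPair (t t' : Tens2) (ht : t.Smooth) (ht' : t'.Smooth) (z v : ℝ × ℝ) :
    fderiv ℝ (gPair t t') z v =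
      fderiv ℝ t.a z v * t'.c z + t.a z * fderiv ℝ t'.c z v
      - 2 * (fderiv ℝ t.b z v * t'.b z + t.b z * fderiv ℝ t'.b z v)
      + fderiv ℝ t.c z v * t'.a z + t.c z * fderiv ℝ t'.a z v := by
  obtain ⟨ha, hb, hc⟩ := ht
  obtain ⟨ha', hb', hc'⟩ := ht'
  have Da : DifferentiableAt ℝ t.a z := (ha.differentiable (by simp)).differentiableAt
  have Db : DifferentiableAt ℝ t.b z := (hb.differentiable (by simp)).differentiableAt
  have Dc : DifferentiableAt ℝ t.c z := (hc.differentiable (by simp)).differentiableAt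
  have Da' : DifferentiableAt ℝ t'.a z := (ha'.differentiable (by simp)).differentiableAt
  have Db' : DifferentiableAt ℝ t'.b z := (hb'.differentiable (by simp)).differentiableAt
  have Dc' : DifferentiableAt ℝ t'.c z := (hc'.differentiable (by simp)).differentiableAt
  have hg : gPair t t' = fun x => t.a x * t'.c x - 2 * (t.b x * t'.b x) + t.c x * t'.a x := by
    funext x; simp [gPair]; ring
  rw [hg]
  have H : HasFDerivAt (fun x => t.a x * t'.c x - 2 * (t.b x * t'.b x) + t.c x * t'.a x)
      ((t.a z • fderiv ℝ t'.c z + t'.c z • fderiv ℝ t.a z)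
        - (2 : ℝ) • (t.b z • fderiv ℝ t'.b z + t'.b z • fderiv ℝ t.b z)
        + (t.c z • fderiv ℝ t'.a z + t'.a z • fderiv ℝ t.c z)) z := by
    exact (((Da.hasFDerivAt.mul Dc'.hasFDerivAt).sub
      ((Db.hasFDerivAt.mul Db'.hasFDerivAt).const_mul 2)).add
      (Dc.hasFDerivAt.mul Da'.hasFDerivAt))
  rw [H.fderiv]
  simp [ContinuousLinearMap.add_apply, ContinuousLinearMap.sub_apply,
    ContinuousLinearMap.smul_apply, smul_eq_mul]
  ring

/-- The zeroth-order pairing `g(t,t') = a c' - 2 b b' + c a'` is infinitesimally invariant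
under Hamiltonian flows: `X_h(g(t,t')) = g(L_{X_h} t, t') + g(t, L_{X_h} t')`, where
`X_h(f) = h_y f_x - h_x f_y`. -/
theorem gPair_invariant (h : ℝ × ℝ → ℝ) (hh : ContDiff ℝ (⊤ : ℕ∞) h)
    (t t' : Tens2) (ht : t.Smooth) (ht' : t'.Smooth) :
    ∀ z : ℝ × ℝ,
      pdy h z * pdx (gPair t t') z - pdx h z * pdy (gPair t t') z =
        gPair (lieH h t) t' z + gPair t (lieH h t') z := by
  intro z
  have hx : pdx (gPair t t') z =
      pdx t.a z * t'.c z + t.a z * pdx t'.c z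
      - 2 * (pdx t.b z * t'.b z + t.b z * pdx t'.b z)
      + pdx t.c z * t'.a z + t.c z * pdx t'.a z :=
    fderiv_gPair t t' ht ht' z (1, 0)
  have hy : pdy (gPair t t') z =
      pdy t.a z * t'.c z + t.a z * pdy t'.c z
      - 2 * (pdy t.b z * t'.b z + t.b z * pdy t'.b z)
      + pdy t.c z * t'.a z + t.c z * pdy t'.a z :=
    fderiv_gPair t t' ht ht' z (0, 1)
  have hsym : pdx (pdy h) z = pdy (pdx h) z := by
    exact schwarz_aux hh z (1, 0) (0, 1)
  rw [hx, hy]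
  simp only [gPair, lieH, lieDeriv]
  have hpdx : pdx h = fun z => fderiv ℝ h z (1, 0) := rfl
  have hnegx : pdx (fun z => -pdx h z) z = - pdx (pdx h) z := by
    simp [pdx, hpdx, fderiv_neg]
  have hnegy : pdy (fun z => -pdx h z) z = - pdy (pdx h) z := by
    simp [pdx, pdy, hpdx, fderiv_neg]
  rw [hnegx, hnegy, hsym]
  ring
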